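/- Let φ : ℝ → ℝ be defined by φ(x) = x for x ≤ 0 and φ(x) = x/2 for x ≥ 0. Then φ is a homeomorphism of ℝ, and, with φ^n denoting the n-th iterate of φ for n ∈ ℤ (negative n meaning iterates of the inverse), the interior in the product space ℝ × ℤ (ℤ carrying the discrete topology) of the isotropy set {(x, n) ∈ ℝ × ℤ : φ^n(x) = x} equals {(x, n) ∈ ℝ × ℤ : n = 0 or x < 0}. -/

import Mathlib

/-!
Every iterate of `φ` fixes `(-∞, 0]`, while `φ^n x = x / 2^n` for `x > 0`, so the isotropy set is
`{n = 0} ∪ {x ≤ 0}`. As `ℤ` is discrete, the interior in `ℝ × ℤ` is taken fibre by fibre, and the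
interior of `(-∞, 0]` is `(-∞, 0)`.
-/

open Set Filter

theorem mem_interior_prod_iff_of_discreteTopology {X Y : Type*} [TopologicalSpace X]
    [TopologicalSpace Y] [DiscreteTopology Y] {s : Set (X × Y)} {x : X} {y : Y} :
    (x, y) ∈ interior s ↔ x ∈ interior {x' | (x', y) ∈ s} := by
  simp only [mem_interior_iff_mem_nhds, nhds_prod_eq, nhds_discrete, prod_pure, mem_map]
  rfl

noncomputable def halvingEquiv : Equiv.Perm ℝ where
  toFun x := if x ≤ 0 then x else x / 2
  invFun x := if x ≤ 0 then x else 2 * x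
  left_inv x := by
    by_cases hx : x ≤ 0
    · simp [hx]
    · have hx2 : ¬x / 2 ≤ 0 := by linarith
      simp only [hx, hx2, if_false]
      ring
  right_inv x := by
    by_cases hx : x ≤ 0
    · simp [hx]
    · have hx2 : ¬2 * x ≤ 0 := by linarith
      simp only [hx, hx2, if_false]
      ring

noncomputable def halvingHomeomorph : ℝ ≃ₜ ℝ where
  toEquiv := halvingEquiv
  continuous_toFun :=
    Continuous.if_le continuous_id (continuous_id.div_const 2) continuous_id continuous_const
      fun x hx => by simp [hx]
  continuous_invFun :=
    Continuous.if_le continuous_id (continuous_const.mul continuous_id) continuous_id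
      continuous_const fun x hx => by simp [hx]

theorem halvingEquiv_zpow_apply_of_nonpos (n : ℤ) {x : ℝ} (hx : x ≤ 0) :
    (halvingEquiv ^ n) x = x :=
  Equiv.Perm.zpow_apply_eq_self_of_apply_eq_self (by simp [halvingEquiv, hx]) n

theorem halvingEquiv_zpow_apply_of_pos (n : ℤ) {x : ℝ} (hx : 0 < x) :
    (halvingEquiv ^ n) x = x / 2 ^ n := by
  induction n using Int.induction_on generalizing x with
  | zero => simp
  | succ k ih =>
    have hφ : halvingEquiv x = x / 2 := if_neg hx.not_ge
    rw [zpow_add_one, Equiv.Perm.mul_apply, hφ, ih (half_pos hx), zpow_add_one₀ two_ne_zero,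
      div_div, mul_comm]
  | pred k ih =>
    have hφ : halvingEquiv⁻¹ x = 2 * x := if_neg hx.not_ge
    rw [zpow_sub_one, Equiv.Perm.mul_apply, hφ, ih (by positivity), zpow_sub_one₀ two_ne_zero]
    field_simp

theorem halvingEquiv_zpow_apply_eq_self_iff (n : ℤ) (x : ℝ) :
    (halvingEquiv ^ n) x = x ↔ n = 0 ∨ x ≤ 0 := by
  refine ⟨fun h => ?_, ?_⟩
  · refine or_iff_not_imp_right.2 fun hx => ?_
    rw [halvingEquiv_zpow_apply_of_pos n (not_le.1 hx), div_eq_iff (by positivity)] at h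
    have h2 : (2 : ℝ) ^ n = 2 ^ (0 : ℤ) := by
      rw [zpow_zero]
      exact (mul_eq_left₀ (not_le.1 hx).ne').1 h.symm
    exact zpow_right_injective₀ two_pos (by norm_num) h2
  · rintro (rfl | hx)
    · simp
    · exact halvingEquiv_zpow_apply_of_nonpos n hx

/-- Let `φ : ℝ → ℝ` be `φ x = x` for `x ≤ 0` and `φ x = x / 2` for `x ≥ 0`.
Then `φ` is a homeomorphism of `ℝ`, and the interior in `ℝ × ℤ` (with `ℤ`
discrete) of the isotropy set `{(x, n) | φ^n x = x}` (where `φ^n` is the `n`-th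
iterate, `n ∈ ℤ`) equals `{(x, n) | n = 0 ∨ x < 0}`. -/
theorem interior_isotropy_of_halving_homeomorph :
    ∃ Φ : ℝ ≃ₜ ℝ,
      (∀ x : ℝ, Φ x = if x ≤ 0 then x else x / 2) ∧
      interior {p : ℝ × ℤ | (Φ.toEquiv ^ p.2) p.1 = p.1} =
        {p : ℝ × ℤ | p.2 = 0 ∨ p.1 < 0} := by
  refine ⟨halvingHomeomorph, fun _ => rfl, ?_⟩
  ext ⟨x, n⟩
  simp only [mem_interior_prod_iff_of_discreteTopology, mem_ofPred_eq]
  change x ∈ interior {y | (halvingEquiv ^ n) y = y} ↔ _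
  simp only [halvingEquiv_zpow_apply_eq_self_iff]
  by_cases hn : n = 0
  · simp [hn]
  · simp only [hn, false_or]
    exact Set.ext_iff.1 interior_Iic x
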